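/- arXiv:2303.03522 — 5 statements merged into one kernel-verified Lean document; each statement's English description precedes it below -/
import Mathlib

section
/- For every integrable real random variable X and every α ∈ (0,1), there exists a unique real number x such that α·E[(X−x)₊] = (1−α)·E[(x−X)₊]. (This unique x is the α-expectile e_α(X).) -/
/-! Let `g(x) = α E[(X-x)₊] - (1-α) E[(x-X)₊]`. For `x ≤ y` the decrements
`E[(X-x)₊] - E[(X-y)₊]` and `E[(y-X)₊] - E[(x-X)₊]` are nonnegative and add up to `y - x`,
because `E[(X-t)₊] - E[(t-X)₊] = E[X] - t`. Hence `g` drops by at least `min α (1-α) · (y - x)` and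
at most `y - x`: it is continuous and strictly decreasing, with limits `∓∞` at `±∞`, so it has exactly
one zero. -/

open MeasureTheory Filter

theorem LipschitzWith.one_of_antitone_of_sub_le {f : ℝ → ℝ} (hf : Antitone f)
    (h : ∀ x y, x ≤ y → f x - f y ≤ y - x) : LipschitzWith 1 f := by
  refine LipschitzWith.of_le_add fun x y => ?_
  rcases le_total x y with hxy | hyx
  · linarith [h x y hxy, Real.dist_eq x y, le_abs_self (x - y), neg_abs_le (x - y)]
  · linarith [hf hyx, dist_nonneg (x := x) (y := y)]

theorem Function.bijective_of_continuous_of_mul_sub_le_sub {f : ℝ → ℝ} (hf : Continuous f)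
    {m : ℝ} (hm : 0 < m) (h : ∀ x y, x ≤ y → m * (y - x) ≤ f x - f y) : Function.Bijective f := by
  have hanti : StrictAnti f := fun x y hxy => by nlinarith [h x y hxy.le]
  have h_top : Tendsto f atBot atTop := by
    refine tendsto_atTop_mono' _ ?_
      (tendsto_atTop_add_const_left _ (f 0) (tendsto_neg_atBot_atTop.const_mul_atTop hm))
    filter_upwards [eventually_le_atBot 0] with x hx
    linarith [h x 0 hx]
  have h_bot : Tendsto f atTop atBot := by
    refine tendsto_atBot_mono' _ ?_
      (tendsto_atBot_add_const_left _ (f 0) (tendsto_neg_atTop_atBot.comp (tendsto_id.const_mul_atTop hm)))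
    filter_upwards [eventually_ge_atTop 0] with y hy
    simp only [Function.comp_apply, id]
    linarith [h 0 y hy]
  exact ⟨hanti.injective, hf.surjective' h_top h_bot⟩

namespace Expectile

variable {Ω : Type*} [MeasurableSpace Ω] {μ : Measure Ω} {X : Ω → ℝ}

theorem integral_max_sub_sub_integral_max_sub [IsProbabilityMeasure μ] (hX : Integrable X μ)
    (t : ℝ) : ∫ ω, max (X ω - t) 0 ∂μ - ∫ ω, max (t - X ω) 0 ∂μ = ∫ ω, X ω ∂μ - t := by
  have hpos : Integrable (fun ω => max (X ω - t) 0) μ := (hX.sub (integrable_const t)).pos_part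
  have hneg : Integrable (fun ω => max (t - X ω) 0) μ := ((integrable_const t).sub hX).pos_part
  rw [← integral_sub hpos hneg]
  calc ∫ ω, max (X ω - t) 0 - max (t - X ω) 0 ∂μ = ∫ ω, X ω - t ∂μ := by
        congr 1 with ω
        simpa only [neg_sub] using max_zero_sub_max_neg_zero_eq_self (X ω - t)
    _ = ∫ ω, X ω ∂μ - t := by simp [integral_sub hX (integrable_const t)]

theorem antitone_integral_max_sub [IsFiniteMeasure μ] (hX : Integrable X μ) :
    Antitone fun t => ∫ ω, max (X ω - t) 0 ∂μ := fun _ _ hst =>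
  integral_mono ((hX.sub (integrable_const _)).pos_part) ((hX.sub (integrable_const _)).pos_part)
    fun ω => max_le_max (by linarith) le_rfl

theorem monotone_integral_max_sub [IsFiniteMeasure μ] (hX : Integrable X μ) :
    Monotone fun t => ∫ ω, max (t - X ω) 0 ∂μ := fun _ _ hst =>
  integral_mono (((integrable_const _).sub hX).pos_part) (((integrable_const _).sub hX).pos_part)
    fun ω => max_le_max (by linarith) le_rfl

variable (μ X) in
noncomputable def gap (α x : ℝ) : ℝ :=
  α * ∫ ω, max (X ω - x) 0 ∂μ - (1 - α) * ∫ ω, max (x - X ω) 0 ∂μ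

theorem gap_sub_gap_bounds [IsProbabilityMeasure μ] (hX : Integrable X μ) {α : ℝ}
    (hα : α ∈ Set.Icc (0 : ℝ) 1) {x y : ℝ} (hxy : x ≤ y) :
    min α (1 - α) * (y - x) ≤ gap μ X α x - gap μ X α y ∧
      gap μ X α x - gap μ X α y ≤ y - x := by
  obtain ⟨hα0, hα1⟩ := hα
  have hA := antitone_integral_max_sub hX hxy
  have hB := monotone_integral_max_sub hX hxy
  have hAB := congr_arg₂ (· - ·) (integral_max_sub_sub_integral_max_sub hX x)
    (integral_max_sub_sub_integral_max_sub hX y)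
  simp only at hA hB hAB
  have hmα := min_le_left α (1 - α)
  have hmα' := min_le_right α (1 - α)
  unfold gap
  constructor <;> nlinarith

theorem bijective_gap [IsProbabilityMeasure μ] (hX : Integrable X μ) {α : ℝ}
    (hα : α ∈ Set.Ioo (0 : ℝ) 1) : Function.Bijective (gap μ X α) := by
  have bounds := fun x y (hxy : x ≤ y) => gap_sub_gap_bounds hX (Set.Ioo_subset_Icc_self hα) hxy
  have hm : 0 < min α (1 - α) := lt_min hα.1 (sub_pos.mpr hα.2)
  have hanti : Antitone (gap μ X α) := fun x y hxy => by
    nlinarith [(bounds x y hxy).1]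
  have hcont := (LipschitzWith.one_of_antitone_of_sub_le hanti fun x y hxy =>
    (bounds x y hxy).2).continuous
  exact Function.bijective_of_continuous_of_mul_sub_le_sub hcont hm fun x y hxy => (bounds x y hxy).1

end Expectile

/-- For every integrable real random variable `X` and every `α ∈ (0,1)`,
there exists a unique `x ∈ ℝ` with `α · E[(X−x)₊] = (1−α) · E[(x−X)₊]`. -/
theorem expectile_existsUnique
    {Ω : Type*} [MeasurableSpace Ω] (μ : Measure Ω) [IsProbabilityMeasure μ]
    (X : Ω → ℝ) (hX : Integrable X μ) (α : ℝ) (hα : α ∈ Set.Ioo (0 : ℝ) 1) :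
    ∃! x : ℝ,
      α * ∫ ω, max (X ω - x) 0 ∂μ = (1 - α) * ∫ ω, max (x - X ω) 0 ∂μ := by
  obtain ⟨x, hx, hunique⟩ := (Expectile.bijective_gap hX hα).existsUnique 0
  exact ⟨x, sub_eq_zero.mp hx, fun y hy => hunique y (sub_eq_zero.mpr hy)⟩
end

section
/- Subadditivity of expectiles: for α ∈ [1/2, 1) and integrable X, Y, it holds that e_α(X + Y) ≤ e_α(X) + e_α(Y). -/
open MeasureTheory

/-! The identification function `φ_α(u) = α u⁺ - (1 - α) u⁻` of the `α`-expectile equals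
`(1 - α) u + (2α - 1) u⁺`. For `α ≥ 1/2` it is therefore subadditive (since `u ↦ u⁺` is) and
increases with slope at least `1 - α`, so `t ↦ E[φ_α(Z - t)]` is strictly decreasing with the
expectile of `Z` as its zero. Subadditivity gives `E[φ_α(X + Y - (e(X) + e(Y)))] ≤ 0`, hence
`e(X + Y) ≤ e(X) + e(Y)`. -/

def expectileIdentification (α u : ℝ) : ℝ :=
  α * max u 0 - (1 - α) * max (-u) 0

namespace expectileIdentification

theorem eq_linear_add_posPart (α u : ℝ) :
    expectileIdentification α u = (1 - α) * u + (2 * α - 1) * max u 0 := by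
  have h := max_zero_sub_max_neg_zero_eq_self u
  unfold expectileIdentification
  linear_combination (1 - α) * h

variable {α : ℝ}

theorem add_le (hα : 1 / 2 ≤ α) (u v : ℝ) :
    expectileIdentification α (u + v) ≤
      expectileIdentification α u + expectileIdentification α v := by
  have hmax : max (u + v) 0 ≤ max u 0 + max v 0 :=
    max_le (add_le_add (le_max_left _ _) (le_max_left _ _)) (by positivity)
  simp only [eq_linear_add_posPart]
  linarith [mul_le_mul_of_nonneg_left hmax (by linarith : (0 : ℝ) ≤ 2 * α - 1)]

theorem one_sub_mul_sub_le (hα : 1 / 2 ≤ α) {u v : ℝ} (huv : u ≤ v) :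
    (1 - α) * (v - u) ≤ expectileIdentification α v - expectileIdentification α u := by
  have hmax : max u 0 ≤ max v 0 := max_le_max_right 0 huv
  simp only [eq_linear_add_posPart]
  linarith [mul_le_mul_of_nonneg_left hmax (by linarith : (0 : ℝ) ≤ 2 * α - 1)]

end expectileIdentification

section Integral

variable {Ω : Type*} [MeasurableSpace Ω] {μ : Measure Ω} {X Y : Ω → ℝ}

theorem integrable_expectileIdentification [IsFiniteMeasure μ] (hX : Integrable X μ) (α t : ℝ) :
    Integrable (fun ω => expectileIdentification α (X ω - t)) μ := by
  have hXt : Integrable (fun ω => X ω - t) μ := hX.sub (integrable_const t)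
  simp only [expectileIdentification.eq_linear_add_posPart]
  exact (hXt.const_mul _).add (hXt.pos_part.const_mul _)

theorem integral_expectileIdentification [IsFiniteMeasure μ] (hX : Integrable X μ) (α t : ℝ) :
    ∫ ω, expectileIdentification α (X ω - t) ∂μ =
      α * ∫ ω, max (X ω - t) 0 ∂μ - (1 - α) * ∫ ω, max (t - X ω) 0 ∂μ := by
  have hpos : Integrable (fun ω => max (X ω - t) 0) μ := (hX.sub (integrable_const t)).pos_part
  have hneg : Integrable (fun ω => max (t - X ω) 0) μ := ((integrable_const t).sub hX).pos_part
  simp only [expectileIdentification, neg_sub]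
  rw [integral_sub (hpos.const_mul α) (hneg.const_mul _), integral_const_mul, integral_const_mul]

theorem integral_expectileIdentification_add_le [IsFiniteMeasure μ] {α : ℝ} (hα : 1 / 2 ≤ α)
    (hX : Integrable X μ) (hY : Integrable Y μ) (s t : ℝ) :
    ∫ ω, expectileIdentification α (X ω + Y ω - (s + t)) ∂μ ≤
      ∫ ω, expectileIdentification α (X ω - s) ∂μ +
        ∫ ω, expectileIdentification α (Y ω - t) ∂μ := by
  rw [← integral_add (integrable_expectileIdentification hX α s)
    (integrable_expectileIdentification hY α t)]
  refine integral_mono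
    (integrable_expectileIdentification (X := fun ω => X ω + Y ω) (hX.add hY) α (s + t))
    ((integrable_expectileIdentification hX α s).add (integrable_expectileIdentification hY α t))
    fun ω => ?_
  have h := expectileIdentification.add_le hα (X ω - s) (Y ω - t)
  rwa [sub_add_sub_comm] at h

theorem strictAnti_integral_expectileIdentification [IsProbabilityMeasure μ] {α : ℝ}
    (hα : α ∈ Set.Ico (1 / 2 : ℝ) 1) (hX : Integrable X μ) :
    StrictAnti fun t => ∫ ω, expectileIdentification α (X ω - t) ∂μ := by
  intro s t hst
  have hgap : ∫ ω, expectileIdentification α (X ω - t) ∂μ + (1 - α) * (t - s) ≤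
      ∫ ω, expectileIdentification α (X ω - s) ∂μ := by
    have hint := integral_mono
      (f := fun ω => expectileIdentification α (X ω - t) + (1 - α) * (t - s))
      ((integrable_expectileIdentification hX α t).add (integrable_const ((1 - α) * (t - s))))
      (integrable_expectileIdentification hX α s) fun ω => by
        have h := expectileIdentification.one_sub_mul_sub_le hα.1 (sub_le_sub_left hst.le (X ω))
        rw [sub_sub_sub_cancel_left] at h
        linarith
    rwa [integral_add (integrable_expectileIdentification hX α t) (integrable_const _),
      integral_const, probReal_univ, one_smul] at hint
  have hpos : 0 < (1 - α) * (t - s) := mul_pos (by linarith [hα.2]) (by linarith)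
  linarith

end Integral

/-- Subadditivity of expectiles: for `α ∈ [1/2, 1)` and integrable `X`, `Y`
on the same probability space, `e_α(X + Y) ≤ e_α(X) + e_α(Y)`. -/
theorem expectile_subadditive
    {Ω : Type*} [MeasurableSpace Ω] (μ : Measure Ω) [IsProbabilityMeasure μ]
    (X Y : Ω → ℝ) (hX : Integrable X μ) (hY : Integrable Y μ)
    (α : ℝ) (hα : α ∈ Set.Ico (1 / 2 : ℝ) 1) (x y z : ℝ)
    (hx : α * ∫ ω, max (X ω - x) 0 ∂μ = (1 - α) * ∫ ω, max (x - X ω) 0 ∂μ)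
    (hy : α * ∫ ω, max (Y ω - y) 0 ∂μ = (1 - α) * ∫ ω, max (y - Y ω) 0 ∂μ)
    (hz : α * ∫ ω, max (X ω + Y ω - z) 0 ∂μ =
        (1 - α) * ∫ ω, max (z - (X ω + Y ω)) 0 ∂μ) :
    z ≤ x + y := by
  have hXx : ∫ ω, expectileIdentification α (X ω - x) ∂μ = 0 := by
    rw [integral_expectileIdentification hX, hx, sub_self]
  have hYy : ∫ ω, expectileIdentification α (Y ω - y) ∂μ = 0 := by
    rw [integral_expectileIdentification hY, hy, sub_self]
  have hZz : ∫ ω, expectileIdentification α (X ω + Y ω - z) ∂μ = 0 := by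
    rw [integral_expectileIdentification (X := fun ω => X ω + Y ω) (hX.add hY), hz, sub_self]
  refine (strictAnti_integral_expectileIdentification (μ := μ) hα (hX.add hY)).le_iff_ge.1 ?_
  calc ∫ ω, expectileIdentification α (X ω + Y ω - (x + y)) ∂μ
      ≤ ∫ ω, expectileIdentification α (X ω - x) ∂μ +
          ∫ ω, expectileIdentification α (Y ω - y) ∂μ :=
        integral_expectileIdentification_add_le hα.1 hX hY x y
    _ = ∫ ω, expectileIdentification α (X ω + Y ω - z) ∂μ := by rw [hXx, hYy, hZz, add_zero]
end

section
/- For a bounded random variable X, the expectile converges to the essential supremum as the risk level tends to 1: lim_{α→1⁻} e_α(X) = ess sup X. -/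
/-!
Write `M = ess sup X`. If `x > M` then `E[(X - x)₊] = 0` while `E[(x - X)₊] ≥ x - M > 0`,
so no expectile lies above `M`. Conversely, for `a < y < M` the event `{X > y}` has
probability `p > 0`; an expectile `x ≤ a` would give
`α (y - a) p ≤ α E[(X - x)₊] = (1 - α) E[(x - X)₊] ≤ (1 - α) E[(M - X)₊]`,
which fails once `α` is close enough to `1`.
-/

open MeasureTheory Filter Set

def IsExpectile {Ω : Type*} [MeasurableSpace Ω] (μ : Measure Ω) (X : Ω → ℝ) (α x : ℝ) : Prop :=
  α * ∫ ω, max (X ω - x) 0 ∂μ = (1 - α) * ∫ ω, max (x - X ω) 0 ∂μ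

section

variable {Ω : Type*} [MeasurableSpace Ω] {μ : Measure Ω} {X : Ω → ℝ}

theorem MeasureTheory.Integrable.posPart_sub_const [IsFiniteMeasure μ] (hX : Integrable X μ)
    (x : ℝ) : Integrable (fun ω => max (X ω - x) 0) μ :=
  (hX.sub (integrable_const x)).pos_part

theorem MeasureTheory.Integrable.posPart_const_sub [IsFiniteMeasure μ] (hX : Integrable X μ)
    (x : ℝ) : Integrable (fun ω => max (x - X ω) 0) μ :=
  ((integrable_const x).sub hX).pos_part

theorem measureReal_lt_pos_of_lt_essSup [IsFiniteMeasure μ] [NeZero μ]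
    (hX : IsBoundedUnder (· ≥ ·) (ae μ) X) {y : ℝ} (hy : y < essSup X μ) :
    0 < μ.real {ω | y < X ω} :=
  ENNReal.toReal_pos (frequently_ae_iff.mp (frequently_lt_of_lt_limsup hX.isCoboundedUnder_le hy))
    (measure_ne_top μ _)

theorem mul_measureReal_lt_le_integral_posPart_sub [IsFiniteMeasure μ] (hX : Integrable X μ)
    (x y : ℝ) : (y - x) * μ.real {ω | y < X ω} ≤ ∫ ω, max (X ω - x) 0 ∂μ := by
  rcases le_or_gt y x with hyx | hxy
  · exact (mul_nonpos_of_nonpos_of_nonneg (by linarith) measureReal_nonneg).trans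
      (integral_nonneg fun ω => le_max_right _ _)
  calc (y - x) * μ.real {ω | y < X ω}
      ≤ (y - x) * μ.real {ω | y - x ≤ max (X ω - x) 0} := by
        refine mul_le_mul_of_nonneg_left (measureReal_mono ?_) (by linarith)
        exact fun ω (hω : y < X ω) =>
          show y - x ≤ max (X ω - x) 0 from le_max_of_le_left (by linarith)
    _ ≤ ∫ ω, max (X ω - x) 0 ∂μ :=
        mul_meas_ge_le_integral_of_nonneg (ae_of_all _ fun ω => le_max_right _ _)
          (hX.posPart_sub_const x) _

namespace IsExpectile

variable {α x : ℝ}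

theorem le_of_ae_le [IsProbabilityMeasure μ] (h : IsExpectile μ X α x) (hα : α < 1)
    (hX : Integrable X μ) {c : ℝ} (hc : ∀ᵐ ω ∂μ, X ω ≤ c) : x ≤ c := by
  by_contra! hcx
  have hupper : ∫ ω, max (X ω - x) 0 ∂μ = 0 :=
    integral_eq_zero_of_ae (hc.mono fun ω hω => max_eq_right (by linarith))
  have hlower : x - c ≤ ∫ ω, max (x - X ω) 0 ∂μ := by
    calc x - c = ∫ _, x - c ∂μ := by simp
      _ ≤ ∫ ω, max (x - X ω) 0 ∂μ :=
        integral_mono_ae (integrable_const _) (hX.posPart_const_sub x)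
          (hc.mono fun ω hω => le_max_of_le_left (by linarith))
  have : (1 - α) * ∫ ω, max (x - X ω) 0 ∂μ = 0 := by rw [← h, hupper, mul_zero]
  rcases mul_eq_zero.mp this with h1 | h2 <;> linarith

theorem lt_of_lt_mul_measureReal [IsFiniteMeasure μ] (h : IsExpectile μ X α x) (hα₀ : 0 ≤ α)
    (hα₁ : α ≤ 1) (hX : Integrable X μ) {a c y : ℝ} (hxc : x ≤ c)
    (hlt : (1 - α) * ∫ ω, max (c - X ω) 0 ∂μ < α * ((y - a) * μ.real {ω | y < X ω})) :
    a < x := by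
  by_contra! hxa
  have := calc α * ((y - a) * μ.real {ω | y < X ω})
      ≤ α * ((y - x) * μ.real {ω | y < X ω}) := by gcongr
    _ ≤ α * ∫ ω, max (X ω - x) 0 ∂μ := by
        gcongr; exact mul_measureReal_lt_le_integral_posPart_sub hX x y
    _ = (1 - α) * ∫ ω, max (x - X ω) 0 ∂μ := h
    _ ≤ (1 - α) * ∫ ω, max (c - X ω) 0 ∂μ :=
        mul_le_mul_of_nonneg_left (integral_mono (hX.posPart_const_sub x)
          (hX.posPart_const_sub c) fun ω => max_le_max (by linarith) le_rfl) (by linarith)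
  linarith

end IsExpectile

end

/-- For a bounded random variable `X`, the expectile converges to the
essential supremum as the risk level tends to `1` from below:
`lim_{α→1⁻} e_α(X) = ess sup X`. -/
theorem expectile_tendsto_essSup
    {Ω : Type*} [MeasurableSpace Ω] (μ : Measure Ω) [IsProbabilityMeasure μ]
    (X : Ω → ℝ) (hX : Integrable X μ) (hbdd : ∃ C : ℝ, ∀ᵐ ω ∂μ, |X ω| ≤ C)
    (e : ℝ → ℝ)
    (he : ∀ α ∈ Set.Ioo (0 : ℝ) 1,
      α * ∫ ω, max (X ω - e α) 0 ∂μ = (1 - α) * ∫ ω, max (e α - X ω) 0 ∂μ) :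
    Filter.Tendsto e (nhdsWithin 1 (Set.Iio 1)) (nhds (essSup X μ)) := by
  obtain ⟨C, hC⟩ := hbdd
  have hbdd_above : IsBoundedUnder (· ≤ ·) (ae μ) X := ⟨C, hC.mono fun _ h => (abs_le.mp h).2⟩
  have hbdd_below : IsBoundedUnder (· ≥ ·) (ae μ) X := ⟨-C, hC.mono fun _ h => (abs_le.mp h).1⟩
  have he_le : ∀ α ∈ Ioo (0 : ℝ) 1, e α ≤ essSup X μ := fun α hα =>
    IsExpectile.le_of_ae_le (he α hα) hα.2 hX (ae_le_essSup hbdd_above)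
  have h_Ioo : ∀ᶠ α in nhdsWithin 1 (Iio 1), α ∈ Ioo (0 : ℝ) 1 := Ioo_mem_nhdsLT zero_lt_one
  refine tendsto_order.2 ⟨fun a ha => ?_, fun b hb => ?_⟩
  · obtain ⟨y, hay, hy⟩ := exists_between ha
    set p := μ.real {ω | y < X ω}
    set K := ∫ ω, max (essSup X μ - X ω) 0 ∂μ
    have hp : 0 < (y - a) * p :=
      mul_pos (sub_pos.mpr hay) (measureReal_lt_pos_of_lt_essSup hbdd_below hy)
    have hlim : Tendsto (fun α : ℝ => α * ((y - a) * p) - (1 - α) * K)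
        (nhdsWithin 1 (Iio 1)) (nhds ((y - a) * p)) := by
      have hcont : Continuous fun α : ℝ => α * ((y - a) * p) - (1 - α) * K := by fun_prop
      simpa using (hcont.tendsto 1).mono_left nhdsWithin_le_nhds
    filter_upwards [h_Ioo, hlim.eventually_const_lt hp] with α hα hpos
    exact IsExpectile.lt_of_lt_mul_measureReal (y := y) (he α hα) hα.1.le hα.2.le hX (he_le α hα)
      (by linarith)
  · filter_upwards [h_Ioo] with α hα using (he_le α hα).trans_lt hb
end

section
/- For α ∈ (1/2,1), β := α/(1−α), γ ∈ (1/β, 1), define Σ_γ(u) := γ(1−u) + (1−γ)·min(1, (1−u)/(1 − (β−1/γ)/(β−1))) and Σ(u) := α(1−u)/(α − u(2α−1)) on [0,1]. Then Σ_γ(u) ≤ Σ(u) for all u ∈ [0,1], with equality at u = 0, u = 1, and u* = (α(1+γ)−1)/((2α−1)γ), where both functions take the value α(1−γ)/(2α−1) at u*. -/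
/-!
`Σ(u) = α/(2α-1) - α(1-α)/(2α-1) · (α - (2α-1)u)⁻¹` is concave on `u ≤ 1`, being a constant minus
a positive multiple of the inverse of a positive affine function. The breakpoint
`(β - 1/γ)/(β - 1)` of `Σ_γ` is exactly `u*`, so `Σ_γ` is linear on `[0, u*]` and on `[u*, 1]`
and takes the values `1`, `1 - γu* = α(1-γ)/(2α-1)`, `0` at `0`, `u*`, `1`, which are also the
values of `Σ` there. Thus `Σ_γ` is the chord interpolant of the concave `Σ` at these nodes.
-/

open Set

theorem ConcaveOn.sub_mul_add_sub_mul_le {𝕜 : Type*} [Field 𝕜] [LinearOrder 𝕜]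
    [IsStrictOrderedRing 𝕜] {s : Set 𝕜} {f : 𝕜 → 𝕜} (hf : ConcaveOn 𝕜 s f) {x y z : 𝕜}
    (hx : x ∈ s) (hz : z ∈ s) (hxy : x ≤ y) (hyz : y ≤ z) : (z - y) * f x + (y - x) * f z ≤ (z - x) * f y := by
  rcases eq_or_lt_of_le (hxy.trans hyz) with rfl | hxz
  · obtain rfl : y = x := le_antisymm hyz hxy
    simp
  have hxz' : 0 < z - x := sub_pos.2 hxz
  have hy : (z - y) / (z - x) * x + (y - x) / (z - x) * z = y := by
    field_simp; ring
  have key := hf.2 hx hz (div_nonneg (sub_nonneg.2 hyz) hxz'.le)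
    (div_nonneg (sub_nonneg.2 hxy) hxz'.le) (by field_simp; ring)
  simp only [smul_eq_mul, hy] at key
  calc (z - y) * f x + (y - x) * f z
      = (z - x) * ((z - y) / (z - x) * f x + (y - x) / (z - x) * f z) := by field_simp
    _ ≤ (z - x) * f y := by gcongr

/-- `Σ_γ`, with its breakpoint `(β - 1/γ)/(β - 1)` written as `t`. -/
noncomputable def kinkedLine (γ t u : ℝ) : ℝ := γ * (1 - u) + (1 - γ) * min 1 ((1 - u) / (1 - t))

section kinkedLine

variable {γ t u : ℝ}

theorem kinkedLine_of_le (ht : t < 1) (hu : u ≤ t) : kinkedLine γ t u = 1 - γ * u := by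
  have : 1 ≤ (1 - u) / (1 - t) := by rw [one_le_div (sub_pos.2 ht)]; linarith
  rw [kinkedLine, min_eq_left this]
  ring

theorem kinkedLine_of_ge (ht : t < 1) (hu : t ≤ u) :
    (1 - t) * kinkedLine γ t u = (1 - u) * (1 - γ * t) := by
  have : (1 - u) / (1 - t) ≤ 1 := by rw [div_le_one (sub_pos.2 ht)]; linarith
  rw [kinkedLine, min_eq_right this]
  field_simp [(sub_pos.2 ht).ne']
  ring

theorem kinkedLine_one : kinkedLine γ t 1 = 0 := by
  simp [kinkedLine]

theorem kinkedLine_le_of_concaveOn {s : Set ℝ} {f : ℝ → ℝ} (hf : ConcaveOn ℝ s f)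
    (h0 : 0 ∈ s) (h1 : 1 ∈ s) (hts : t ∈ s) (ht : t ∈ Ioo 0 1)
    (hf0 : f 0 = 1) (hf1 : f 1 = 0) (hft : f t = 1 - γ * t) (hu : u ∈ Icc 0 1) :
    kinkedLine γ t u ≤ f u := by
  rcases le_total u t with hut | htu
  · have := hf.sub_mul_add_sub_mul_le h0 hts hu.1 hut
    rw [kinkedLine_of_le ht.2 hut]
    rw [hf0, hft] at this
    nlinarith [ht.1]
  · have := hf.sub_mul_add_sub_mul_le hts h1 htu hu.2
    have hk := kinkedLine_of_ge (γ := γ) ht.2 htu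
    rw [hf1, hft] at this
    nlinarith [ht.2]

end kinkedLine

noncomputable def envelope (α u : ℝ) : ℝ := α * (1 - u) / (α - u * (2 * α - 1))

theorem concaveOn_envelope {α : ℝ} (h₀ : 1 / 2 < α) (h₁ : α < 1) :
    ConcaveOn ℝ (Iic 1) (envelope α) := by
  have hc : 0 < 2 * α - 1 := by linarith
  let g : ℝ →ᵃ[ℝ] ℝ := AffineMap.const ℝ ℝ α - (2 * α - 1) • AffineMap.id ℝ ℝ
  have hg : ∀ u, g u = α - u * (2 * α - 1) := fun u => by simp [g]; ring
  have hinv : ConvexOn ℝ (g ⁻¹' Ioi 0) (fun u => (g u)⁻¹) := by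
    simpa [Function.comp_def] using (convexOn_zpow (𝕜 := ℝ) (-1)).comp_affineMap g
  have hsub : Iic 1 ⊆ g ⁻¹' Ioi 0 := fun u (hu : u ≤ 1) => by
    simp only [mem_preimage, mem_Ioi, hg]; nlinarith
  have hcoef : 0 ≤ α * (1 - α) / (2 * α - 1) := by positivity
  refine ((concaveOn_const (α / (2 * α - 1)) (convex_Iic 1)).sub
    ((hinv.subset hsub (convex_Iic 1)).smul hcoef)).congr ?_
  intro u hu
  have hgu : α - u * (2 * α - 1) ≠ 0 := hg u ▸ (hsub hu).ne'
  simp only [Pi.sub_apply, smul_eq_mul, envelope, hg]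
  rw [eq_div_iff hgu, sub_mul, mul_assoc, inv_mul_cancel₀ hgu, mul_one, div_mul_eq_mul_div,
    div_sub_div_same, div_eq_iff hc.ne']
  ring

noncomputable def crossover (α γ : ℝ) : ℝ := (α * (1 + γ) - 1) / ((2 * α - 1) * γ)

section crossover

variable {α γ : ℝ}

theorem envelope_zero (hα : α ≠ 0) : envelope α 0 = 1 := by
  simp [envelope, hα]

theorem envelope_one : envelope α 1 = 0 := by
  simp [envelope]

theorem div_sub_one_div_eq_crossover (hα : α ≠ 1) (hc : 2 * α - 1 ≠ 0) (hγ : γ ≠ 0) :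
    (α / (1 - α) - 1 / γ) / (α / (1 - α) - 1) = crossover α γ := by
  have : 1 - α ≠ 0 := sub_ne_zero.2 hα.symm
  have hβ : α / (1 - α) - 1 = (α * 2 - 1) / (1 - α) := by field_simp; ring
  -- `field_simp` looks for its side conditions in its normal form `α * 2 - 1 ≠ 0`.
  rw [mul_comm] at hc
  rw [hβ, crossover]
  field_simp
  ring

theorem one_sub_mul_crossover (hc : 2 * α - 1 ≠ 0) (hγ : γ ≠ 0) :
    1 - γ * crossover α γ = α * (1 - γ) / (2 * α - 1) := by
  rw [mul_comm] at hc
  rw [crossover]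
  field_simp
  ring

theorem envelope_crossover (hα : α ≠ 1) (hc : 2 * α - 1 ≠ 0) (hγ : γ ≠ 0) :
    envelope α (crossover α γ) = α * (1 - γ) / (2 * α - 1) := by
  have : 1 - α ≠ 0 := sub_ne_zero.2 hα.symm
  rw [mul_comm] at hc
  have hd : α - crossover α γ * (2 * α - 1) = (1 - α) / γ := by
    rw [crossover]; field_simp; ring
  rw [envelope, hd, crossover]
  field_simp
  ring

theorem crossover_mem_Ioo (h₀ : 1 / 2 < α) (h₁ : α < 1) (hαγ : 1 - α < α * γ) (hγ : γ < 1) :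
    crossover α γ ∈ Ioo 0 1 := by
  have hγ₀ : 0 < γ := by nlinarith
  have hc : 0 < (2 * α - 1) * γ := by nlinarith
  rw [crossover, mem_Ioo, div_lt_one hc]
  exact ⟨div_pos (by linarith) hc, by nlinarith⟩

end crossover

/-- For `α ∈ (1/2,1)`, `β = α/(1−α)`, `γ ∈ (1/β, 1)`, the functions
`Σ_γ(u) = γ(1−u) + (1−γ)·min(1, (1−u)/(1 − (β−1/γ)/(β−1)))` and
`Σ(u) = α(1−u)/(α − u(2α−1))` satisfy `Σ_γ ≤ Σ` on `[0,1]`, with equality at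
`u = 0`, `u = 1` and `u* = (α(1+γ)−1)/((2α−1)γ)`, where both take the value
`α(1−γ)/(2α−1)` at `u*`. -/
theorem spectrum_envelope_comparison
    (α γ : ℝ) (hα : α ∈ Set.Ioo (1 / 2 : ℝ) 1)
    (hγ : γ ∈ Set.Ioo ((α / (1 - α))⁻¹) 1) :
    let β : ℝ := α / (1 - α)
    let SigmaGamma : ℝ → ℝ := fun u =>
      γ * (1 - u) + (1 - γ) * min 1 ((1 - u) / (1 - (β - 1 / γ) / (β - 1)))
    let Sigma : ℝ → ℝ := fun u => α * (1 - u) / (α - u * (2 * α - 1))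
    let ustar : ℝ := (α * (1 + γ) - 1) / ((2 * α - 1) * γ)
    (∀ u ∈ Set.Icc (0 : ℝ) 1, SigmaGamma u ≤ Sigma u) ∧
      SigmaGamma 0 = Sigma 0 ∧ SigmaGamma 1 = Sigma 1 ∧
      SigmaGamma ustar = Sigma ustar ∧
      SigmaGamma ustar = α * (1 - γ) / (2 * α - 1) := by
  intro β SigmaGamma Sigma ustar
  obtain ⟨h₀, h₁⟩ := hα
  have hα_ne : α ≠ 0 := by linarith
  have hc : 2 * α - 1 ≠ 0 := by linarith
  have hαγ : 1 - α < α * γ := by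
    have := hγ.1
    rw [inv_div, div_lt_iff₀ (by linarith)] at this
    linarith
  have hγ_ne : γ ≠ 0 := by rintro rfl; linarith
  have ht : ustar ∈ Ioo 0 1 := crossover_mem_Ioo h₀ h₁ hαγ hγ.2
  have hSG : SigmaGamma = kinkedLine γ ustar := by
    funext u
    simp only [SigmaGamma, β, div_sub_one_div_eq_crossover h₁.ne hc hγ_ne]
    rfl
  have hkink : SigmaGamma ustar = 1 - γ * ustar := hSG ▸ kinkedLine_of_le ht.2 le_rfl
  have hft : Sigma ustar = 1 - γ * ustar :=
    (envelope_crossover h₁.ne hc hγ_ne).trans (one_sub_mul_crossover hc hγ_ne).symm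
  refine ⟨fun u hu => ?_, ?_, ?_, hkink.trans hft.symm,
    hkink.trans (one_sub_mul_crossover hc hγ_ne)⟩
  · rw [hSG]
    exact kinkedLine_le_of_concaveOn (concaveOn_envelope h₀ h₁) (by simp) (by simp) ht.2.le ht
      (envelope_zero hα_ne) envelope_one hft hu
  · rw [hSG, kinkedLine_of_le ht.2 ht.1.le, mul_zero, sub_zero]
    exact (envelope_zero hα_ne).symm
  · rw [hSG, kinkedLine_one]
    exact envelope_one.symm
end

section
/- Comparison with the Average Value-at-Risk: for every integrable X and α ∈ [1/2,1), e_α(X) ≤ AVaR_{2−1/α}(X), where AVaR_β(X) = inf_{q∈ℝ} { q + (1/(1−β))·E[(X−q)₊] }. -/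
/-!
Fix `q` and put `A = E[(X-q)₊]`, `C = E[(X-x)₊]`, `B = E[(x-X)₊]`, so that `αC = (1-α)B`.
The AVaR bound at `q` amounts to `(1-α)(x-q) ≤ αA`, which is trivial for `x ≤ q`. For `q ≤ x`
we have `A ≥ C` and `A ≥ E[X] - q = C - B + (x - q)`, and the weights `2α-1` and `1-α` combine
these so that `C` and `B` cancel against the expectile equation.
-/

open MeasureTheory

namespace MeasureTheory

variable {Ω : Type*} [MeasurableSpace Ω] {μ : Measure Ω} {X : Ω → ℝ}

def IsExpectile (μ : Measure Ω) (X : Ω → ℝ) (α x : ℝ) : Prop :=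
  α * ∫ ω, max (X ω - x) 0 ∂μ = (1 - α) * ∫ ω, max (x - X ω) 0 ∂μ

lemma integral_max_sub_zero_le_of_le [IsFiniteMeasure μ] (hX : Integrable X μ) {q x : ℝ}
    (hqx : q ≤ x) :
    ∫ ω, max (X ω - x) 0 ∂μ ≤ ∫ ω, max (X ω - q) 0 ∂μ :=
  integral_mono (hX.sub (integrable_const x)).pos_part (hX.sub (integrable_const q)).pos_part
    fun ω => max_le_max (by linarith) le_rfl

lemma integral_sub_const [IsProbabilityMeasure μ] (hX : Integrable X μ) (c : ℝ) :
    ∫ ω, X ω - c ∂μ = ∫ ω, X ω ∂μ - c := by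
  rw [integral_sub hX (integrable_const c), integral_const, probReal_univ, one_smul]

lemma integral_sub_le_integral_max_sub_zero [IsProbabilityMeasure μ] (hX : Integrable X μ)
    (q : ℝ) : ∫ ω, X ω ∂μ - q ≤ ∫ ω, max (X ω - q) 0 ∂μ := by
  rw [← integral_sub_const hX]
  exact integral_mono (hX.sub (integrable_const q)) (hX.sub (integrable_const q)).pos_part
    fun ω => le_max_left _ _

lemma integral_max_sub_zero_sub_integral_max_sub_zero [IsProbabilityMeasure μ]
    (hX : Integrable X μ) (x : ℝ) :
    ∫ ω, max (X ω - x) 0 ∂μ - ∫ ω, max (x - X ω) 0 ∂μ = ∫ ω, X ω ∂μ - x := by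
  have hpos : Integrable (fun ω => max (X ω - x) 0) μ := (hX.sub (integrable_const x)).pos_part
  have hneg : Integrable (fun ω => max (x - X ω) 0) μ := ((integrable_const x).sub hX).pos_part
  rw [← integral_sub hpos hneg, ← integral_sub_const hX]
  congr 1 with ω
  simpa using max_zero_sub_max_neg_zero_eq_self (X ω - x)

lemma IsExpectile.one_sub_mul_sub_le [IsProbabilityMeasure μ] {α x : ℝ}
    (hx : IsExpectile μ X α x) (hX : Integrable X μ) (hα : α ∈ Set.Icc (1 / 2 : ℝ) 1) (q : ℝ) :
    (1 - α) * (x - q) ≤ α * ∫ ω, max (X ω - q) 0 ∂μ := by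
  obtain ⟨hα₁, hα₂⟩ := hα
  have hA : 0 ≤ ∫ ω, max (X ω - q) 0 ∂μ := integral_nonneg fun ω => le_max_right _ _
  rcases le_total x q with hxq | hqx
  · exact (mul_nonpos_of_nonneg_of_nonpos (by linarith) (by linarith)).trans
      (mul_nonneg (by linarith) hA)
  have hC := integral_max_sub_zero_le_of_le hX hqx
  have hEX := integral_sub_le_integral_max_sub_zero hX q
  have hCB := integral_max_sub_zero_sub_integral_max_sub_zero hX x
  unfold IsExpectile at hx
  calc (1 - α) * (x - q)
      = (2 * α - 1) * ∫ ω, max (X ω - x) 0 ∂μ + (1 - α) * (∫ ω, X ω ∂μ - q) := by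
        linear_combination -hx + (1 - α) * hCB
    _ ≤ (2 * α - 1) * ∫ ω, max (X ω - q) 0 ∂μ + (1 - α) * ∫ ω, max (X ω - q) 0 ∂μ :=
        add_le_add (mul_le_mul_of_nonneg_left hC (by linarith))
          (mul_le_mul_of_nonneg_left hEX (by linarith))
    _ = α * ∫ ω, max (X ω - q) 0 ∂μ := by ring

end MeasureTheory

/-- Comparison with the Average Value-at-Risk: for integrable `X` and
`α ∈ [1/2,1)`, `e_α(X) ≤ AVaR_{2−1/α}(X)`, where
`AVaR_β(X) = inf_{q∈ℝ} { q + (1/(1−β))·E[(X−q)₊] }`. -/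
theorem expectile_le_avar
    {Ω : Type*} [MeasurableSpace Ω] (μ : Measure Ω) [IsProbabilityMeasure μ]
    (X : Ω → ℝ) (hX : Integrable X μ)
    (α : ℝ) (hα : α ∈ Set.Ico (1 / 2 : ℝ) 1) (x : ℝ)
    (hx : α * ∫ ω, max (X ω - x) 0 ∂μ = (1 - α) * ∫ ω, max (x - X ω) 0 ∂μ) :
    x ≤ ⨅ q : ℝ, (q + (1 - (2 - 1 / α))⁻¹ * ∫ ω, max (X ω - q) 0 ∂μ) := by
  obtain ⟨hα₁, hα₂⟩ := hα
  have hα₀ : 0 < α := by linarith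
  have h1α : 0 < 1 - α := by linarith
  have hcoeff : (1 - (2 - 1 / α))⁻¹ = α / (1 - α) := by
    rw [show 1 - (2 - 1 / α) = (1 - α) / α by field_simp; ring, inv_div]
  refine le_ciInf fun q => ?_
  have hq := IsExpectile.one_sub_mul_sub_le hx hX ⟨hα₁, hα₂.le⟩ q
  rw [hcoeff, ← sub_le_iff_le_add', div_mul_eq_mul_div, le_div_iff₀ h1α]
  linarith
end
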